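/- arXiv:1908.10684 — 2 statements merged into one kernel-verified Lean document; each statement's English description precedes it below -/
import Mathlib

section
/- Let $R_o$ have CDF $F_{R_o}(r) = 1 - \exp(-\pi \rho \lambda r^2)$ for $r \ge 0$ (with $\rho, \lambda > 0$), and suppose the conditional CDF of $R_1$ given $R_o = r$ is $F_{R_1}(v \mid r) = 1 - \exp(-\pi\lambda\rho(v^2 - r^2))$ for $v \ge r$. Then the marginal CDF of $R_1$ is $F_{R_1}(v) = 1 - (\pi\lambda\rho v^2 + 1)\exp(-\pi\lambda\rho v^2)$ for $v \ge 0$. -/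
/-!
Since `exp (-c (v² - r²)) * exp (-c r²) = exp (-c v²)`, the integrand splits as
`2 c r exp (-c r²) - 2 c r exp (-c v²)`. The first term is the derivative of `-exp (-c r²)` and
integrates to `1 - exp (-c v²)` over `[0, v]`; the second integrates to `c v² exp (-c v²)`.
-/

open MeasureTheory Real

theorem hasDerivAt_neg_exp_neg_mul_sq (c x : ℝ) :
    HasDerivAt (fun r => -exp (-c * r ^ 2)) (2 * c * x * exp (-c * x ^ 2)) x := by
  refine (((hasDerivAt_pow 2 x).const_mul (-c)).exp.fun_neg).congr_deriv ?_
  push_cast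
  ring

theorem integral_mul_exp_neg_mul_sq (c v : ℝ) :
    ∫ r in (0 : ℝ)..v, 2 * c * r * exp (-c * r ^ 2) = 1 - exp (-c * v ^ 2) := by
  rw [intervalIntegral.integral_eq_sub_of_hasDerivAt
    (fun x _ => hasDerivAt_neg_exp_neg_mul_sq c x)
    ((by fun_prop : Continuous _).intervalIntegrable _ _)]
  simp only [neg_mul, ne_eq, OfNat.ofNat_ne_zero, not_false_eq_true, zero_pow, mul_zero, exp_zero,
    sub_neg_eq_add]
  ring

theorem one_sub_exp_mul_exp_neg_mul_sq (c v r : ℝ) :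
    (1 - exp (-c * (v ^ 2 - r ^ 2))) * (2 * c * r * exp (-c * r ^ 2))
      = 2 * c * r * exp (-c * r ^ 2) - 2 * c * exp (-c * v ^ 2) * r := by
  have h : exp (-c * (v ^ 2 - r ^ 2)) * exp (-c * r ^ 2) = exp (-c * v ^ 2) := by
    rw [← exp_add]; ring_nf
  linear_combination (-(2 * c * r)) * h

theorem integral_Icc_one_sub_exp_mul_rayleigh_pdf (c : ℝ) {v : ℝ} (hv : 0 ≤ v) :
    ∫ r in Set.Icc (0 : ℝ) v, (1 - exp (-c * (v ^ 2 - r ^ 2))) * (2 * c * r * exp (-c * r ^ 2))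
      = 1 - (c * v ^ 2 + 1) * exp (-c * v ^ 2) := by
  rw [integral_Icc_eq_integral_Ioc, ← intervalIntegral.integral_of_le hv]
  simp_rw [one_sub_exp_mul_exp_neg_mul_sq]
  rw [intervalIntegral.integral_sub
    ((by fun_prop : Continuous _).intervalIntegrable _ _)
    ((by fun_prop : Continuous _).intervalIntegrable _ _), integral_mul_exp_neg_mul_sq,
    intervalIntegral.integral_const_mul, integral_id]
  ring

theorem stmt7_general {Ω : Type*} [MeasurableSpace Ω] (P : Measure Ω)
    (ρ lam : ℝ) (R1 : Ω → ℝ)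
    (hR1 : ∀ v : ℝ, 0 ≤ v →
      (P {ω | R1 ω ≤ v}).toReal
        = ∫ r in Set.Icc (0:ℝ) v,
            (1 - Real.exp (-(Real.pi * lam * ρ) * (v ^ 2 - r ^ 2)))
              * (2 * Real.pi * ρ * lam * r * Real.exp (-(Real.pi * ρ * lam) * r ^ 2))) :
    ∀ v : ℝ, 0 ≤ v →
      (P {ω | R1 ω ≤ v}).toReal
        = 1 - (Real.pi * lam * ρ * v ^ 2 + 1) * Real.exp (-(Real.pi * lam * ρ) * v ^ 2) := by
  intro v hv
  rw [hR1 v hv, ← integral_Icc_one_sub_exp_mul_rayleigh_pdf (π * lam * ρ) hv]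
  congr with r
  ring_nf

/-- Marginal CDF of the dominant interferer distance `R₁`, obtained by integrating the
conditional CDF given the link distance `R_o` against the density of `R_o`. -/
theorem stmt7 {Ω : Type*} [MeasurableSpace Ω] (P : Measure Ω) [IsProbabilityMeasure P]
    (ρ lam : ℝ) (hρ : 0 < ρ) (hlam : 0 < lam) (Ro R1 : Ω → ℝ)
    (hRo : ∀ r : ℝ, (P {ω | Ro ω ≤ r}).toReal
      = if r < 0 then 0 else 1 - Real.exp (-(Real.pi * ρ * lam) * r ^ 2))
    (hR1 : ∀ v : ℝ, 0 ≤ v →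
      (P {ω | R1 ω ≤ v}).toReal
        = ∫ r in Set.Icc (0:ℝ) v,
            (1 - Real.exp (-(Real.pi * lam * ρ) * (v ^ 2 - r ^ 2)))
              * (2 * Real.pi * ρ * lam * r * Real.exp (-(Real.pi * ρ * lam) * r ^ 2))) :
    ∀ v : ℝ, 0 ≤ v →
      (P {ω | R1 ω ≤ v}).toReal
        = 1 - (Real.pi * lam * ρ * v ^ 2 + 1) * Real.exp (-(Real.pi * lam * ρ) * v ^ 2) :=
  stmt7_general P ρ lam R1 hR1
end

section
/- For $\delta \in (0,1)$, $\tau > 0$, and $\rho > 0$, the double integral $(2\pi\lambda\rho)^2 \int_0^\infty \int_r^\infty \frac{\exp(-\pi\lambda r^2 \beta(\tau,r,v) - \pi\lambda\rho v^2)}{1 + \tau (r/v)^{1/\delta}} v\,\mathrm{d}v\, r\,\mathrm{d}r$, where $\beta(\tau,r,v) = \tau^{\delta}\int_{\tau^{-\delta}(v/r)^2}^{\infty}\frac{\mathrm{d}u}{1+u^{1/\delta}}$, equals $\rho^2 \tau^{-\delta} \int_0^{\tau^{\delta}} \frac{(\tilde\beta(t) + \rho)^{-2}}{1 + t^{1/\delta}}\,\mathrm{d}t$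 with $\tilde\beta(t) = t\int_{t^{-1}}^{\infty}\frac{\mathrm{d}u}{1+u^{1/\delta}}$, and in particular is independent of $\lambda > 0$. -/
/-!
Substituting `t = τ^δ (r/v)²` in the inner integral maps `v ∈ [r, ∞)` onto the fixed interval
`t ∈ (0, τ^δ]`, turns `r² β(τ,r,v)` into `v² β̃(t)` and `τ (r/v)^α` into `t^{1/δ}`. After
exchanging the order of integration, the `r`-integral is the Gaussian moment
`∫₀^∞ r³ e^{-c r²} dr = 1/(2c²)` with `c = πλτ^δ (β̃(t) + ρ)/t`, and the `λ²` in `1/c²` cancels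
against the prefactor `(2πλρ)²`.
-/

open MeasureTheory Real

/-- The function `β(τ,r,v)` appearing in the conditional interference Laplace transform. -/
noncomputable def betaFn (δ τ r v : ℝ) : ℝ :=
  τ ^ δ * ∫ u in Set.Ici (τ ^ (-δ) * (v / r) ^ 2), 1 / (1 + u ^ (1 / δ))

/-- The function `β̃(t) = t ∫_{t⁻¹}^∞ du/(1+u^{1/δ})`. -/
noncomputable def betaTilde (δ t : ℝ) : ℝ :=
  t * ∫ u in Set.Ici t⁻¹, 1 / (1 + u ^ (1 / δ))

theorem measurable_setIntegral_Ici {g : ℝ → ℝ} (hg : Measurable g) :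
    Measurable fun x => ∫ u in Set.Ici x, g u := by
  simp_rw [← integral_indicator measurableSet_Ici]
  have hF : Measurable fun p : ℝ × ℝ => (Set.Ici p.1).indicator g p.2 := by
    refine Measurable.ite (measurableSet_le measurable_fst measurable_snd) ?_ measurable_const
    exact hg.comp measurable_snd
  exact hF.stronglyMeasurable.integral_prod_right'.measurable

theorem rpow_mul_sq_rpow_one_div {τ x δ : ℝ} (hτ : 0 ≤ τ) (hx : 0 ≤ x) (hδ : δ ≠ 0) :
    (τ ^ δ * x ^ 2) ^ (1 / δ) = τ * x ^ (2 / δ) := by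
  rw [mul_rpow (rpow_nonneg hτ _) (by positivity), ← rpow_mul hτ, mul_one_div_cancel hδ,
    rpow_one, ← rpow_natCast, ← rpow_mul hx]
  norm_num [div_eq_mul_one_div 2 δ]

theorem integral_Ici_eq_integral_Ioc_div_sqrt {C a : ℝ} (hC : 0 < C) (ha : 0 < a) (h : ℝ → ℝ) :
    ∫ v in Set.Ici (C / √a), h v = ∫ t in Set.Ioc 0 a, C / (2 * t * √t) * h (C / √t) := by
  have hderiv : ∀ t ∈ Set.Ioc 0 a,
      HasDerivWithinAt (fun t => C / √t) (-(C / (2 * t * √t))) (Set.Ioc 0 a) t := by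
    intro t ht
    have hs : √t ≠ 0 := (sqrt_pos.2 ht.1).ne'
    have h := ((hasDerivAt_sqrt ht.1.ne').fun_inv hs |>.const_mul C).hasDerivWithinAt
      (s := Set.Ioc 0 a)
    simp only [← div_eq_mul_inv] at h
    refine h.congr_deriv ?_
    rw [sq_sqrt ht.1.le]
    field_simp
  have hinj : Set.InjOn (fun t => C / √t) (Set.Ioc 0 a) := by
    intro t₁ ht₁ t₂ ht₂ heq
    have := congrArg (fun x => (C / x) ^ 2) heq
    simpa only [div_div_cancel₀ hC.ne', sq_sqrt ht₁.1.le, sq_sqrt ht₂.1.le] using this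
  have himage : (fun t => C / √t) '' Set.Ioc 0 a = Set.Ici (C / √a) := by
    ext v
    constructor
    · rintro ⟨t, ⟨ht₀, hta⟩, rfl⟩
      exact div_le_div_of_nonneg_left hC.le (sqrt_pos.2 ht₀) (sqrt_le_sqrt hta)
    · intro hv
      have hv₀ : 0 < v := (div_pos hC (sqrt_pos.2 ha)).trans_le hv
      refine ⟨(C / v) ^ 2, ⟨by positivity, ?_⟩, ?_⟩
      · calc (C / v) ^ 2 ≤ (C / (C / √a)) ^ 2 := by gcongr; exact hv
          _ = a := by rw [div_div_cancel₀ hC.ne', sq_sqrt ha.le]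
      · simp only [sqrt_sq (div_pos hC hv₀).le, div_div_cancel₀ hC.ne']
  rw [← himage, integral_image_eq_integral_abs_deriv_smul measurableSet_Ioc hderiv hinj]
  refine setIntegral_congr_fun measurableSet_Ioc fun t ht => ?_
  rw [abs_neg, abs_of_pos (by have := sqrt_pos.2 ht.1; have := ht.1; positivity), smul_eq_mul]

theorem integral_Ioi_pow_three_mul_exp_neg_mul_sq {b : ℝ} (hb : 0 < b) :
    ∫ r in Set.Ioi (0:ℝ), r ^ 3 * exp (-b * r ^ 2) = 1 / (2 * b ^ 2) := by
  have h := integral_rpow_mul_exp_neg_mul_rpow (p := 2) (q := 3) two_pos (by norm_num) hb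
  norm_num [rpow_two, Real.Gamma_two, rpow_neg hb.le] at h
  simp only [neg_mul, h]
  ring

theorem integrableOn_Ioi_pow_three_mul_exp_neg_mul_sq {b : ℝ} (hb : 0 < b) :
    IntegrableOn (fun r : ℝ => r ^ 3 * exp (-b * r ^ 2)) (Set.Ioi 0) := by
  simpa using integrableOn_rpow_mul_exp_neg_mul_sq hb (s := 3) (by norm_num)

theorem integral_Ioi_integral_mul_pow_three_mul_exp_neg_mul_sq {S : Set ℝ} (hS : MeasurableSet S)
    {w c : ℝ → ℝ} (hw : Measurable w) (hc : Measurable c) (hc₀ : ∀ t ∈ S, 0 < c t)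
    (hint : IntegrableOn (fun t => w t / c t ^ 2) S) :
    ∫ r in Set.Ioi 0, ∫ t in S, w t * (r ^ 3 * exp (-c t * r ^ 2))
      = ∫ t in S, w t / (2 * c t ^ 2) := by
  set F : ℝ × ℝ → ℝ := fun p => w p.2 * (p.1 ^ 3 * exp (-c p.2 * p.1 ^ 2))
  have hnorm : ∀ t ∈ S, ∫ r in Set.Ioi 0, ‖F (r, t)‖ = ‖w t / c t ^ 2‖ / 2 := by
    intro t ht
    calc ∫ r in Set.Ioi 0, ‖F (r, t)‖
        = ∫ r in Set.Ioi 0, |w t| * (r ^ 3 * exp (-c t * r ^ 2)) := by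
          refine setIntegral_congr_fun measurableSet_Ioi fun r (hr : 0 < r) => ?_
          change ‖w t * (r ^ 3 * exp (-c t * r ^ 2))‖ = _
          rw [norm_mul, norm_eq_abs,
            norm_of_nonneg (by positivity : 0 ≤ r ^ 3 * exp (-c t * r ^ 2))]
      _ = ‖w t / c t ^ 2‖ / 2 := by
          rw [integral_const_mul, integral_Ioi_pow_three_mul_exp_neg_mul_sq (hc₀ t ht), norm_div,
            norm_eq_abs, norm_of_nonneg (by positivity)]
          ring
  have hF : Integrable F ((volume.restrict (Set.Ioi 0)).prod (volume.restrict S)) := by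
    refine (integrable_prod_iff' (by fun_prop)).2 ⟨?_, ?_⟩
    · filter_upwards [ae_restrict_mem hS] with t ht
      exact (integrableOn_Ioi_pow_three_mul_exp_neg_mul_sq (hc₀ t ht)).const_mul (w t)
    · refine (hint.norm.div_const 2).congr ?_
      filter_upwards [ae_restrict_mem hS] with t ht
      exact (hnorm t ht).symm
  rw [integral_integral_swap hF]
  refine setIntegral_congr_fun hS fun t ht => ?_
  rw [integral_const_mul, integral_Ioi_pow_three_mul_exp_neg_mul_sq (hc₀ t ht)]
  ring

@[fun_prop]
theorem measurable_betaTilde (δ : ℝ) : Measurable (betaTilde δ) :=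
  measurable_id.mul ((measurable_setIntegral_Ici (by fun_prop)).comp measurable_inv)

theorem betaTilde_nonneg (δ : ℝ) {t : ℝ} (ht : 0 < t) : 0 ≤ betaTilde δ t := by
  refine mul_nonneg ht.le (setIntegral_nonneg measurableSet_Ici fun u hu => ?_)
  have : 0 < u ^ (1 / δ) := rpow_pos_of_pos ((inv_pos.2 ht).trans_le hu) _
  positivity

theorem integrableOn_betaTilde_integrand (δ : ℝ) {ρ a : ℝ} (hρ : 0 < ρ) :
    IntegrableOn (fun t => ((betaTilde δ t + ρ) ^ 2)⁻¹ / (1 + t ^ (1 / δ))) (Set.Ioc 0 a) := by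
  refine Measure.integrableOn_of_bounded (M := (ρ ^ 2)⁻¹) measure_Ioc_lt_top.ne
    (by fun_prop : Measurable _).aestronglyMeasurable ?_
  filter_upwards [ae_restrict_mem measurableSet_Ioc] with t ⟨ht, _⟩
  have hβ := betaTilde_nonneg δ ht
  have hD : 1 ≤ 1 + t ^ (1 / δ) := by linarith [rpow_pos_of_pos ht (1 / δ)]
  rw [norm_of_nonneg (by positivity)]
  calc ((betaTilde δ t + ρ) ^ 2)⁻¹ / (1 + t ^ (1 / δ)) ≤ ((betaTilde δ t + ρ) ^ 2)⁻¹ :=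
        div_le_self (by positivity) hD
    _ ≤ (ρ ^ 2)⁻¹ := by gcongr; linarith

theorem betaFn_eq_mul_betaTilde (δ : ℝ) {τ r v : ℝ} (hτ : 0 < τ) (hr : r ≠ 0) (hv : v ≠ 0) :
    betaFn δ τ r v = (v / r) ^ 2 * betaTilde δ (τ ^ δ * (r / v) ^ 2) := by
  have hinv : (τ ^ δ * (r / v) ^ 2)⁻¹ = τ ^ (-δ) * (v / r) ^ 2 := by
    rw [rpow_neg hτ.le, mul_inv, ← inv_pow, inv_div]
  rw [betaFn, betaTilde, hinv, ← mul_assoc, ← mul_assoc]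
  congr 1
  field_simp

theorem integral_Ici_betaFn_eq_integral_Ioc_betaTilde {δ α τ r : ℝ} (hδ : δ ≠ 0)
    (hα : α = 2 / δ) (hτ : 0 < τ) (hr : 0 < r) (lam ρ : ℝ) :
    (∫ v in Set.Ici r,
        (exp (-(π * lam * r ^ 2 * betaFn δ τ r v) - π * lam * ρ * v ^ 2)
          / (1 + τ * (r / v) ^ α)) * v) * r
      = ∫ t in Set.Ioc 0 (τ ^ δ), τ ^ δ / (2 * t ^ 2 * (1 + t ^ (1 / δ))) *
          (r ^ 3 * exp (-(π * lam * τ ^ δ * (betaTilde δ t + ρ) / t) * r ^ 2)) := by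
  set a := τ ^ δ
  have ha : 0 < a := rpow_pos_of_pos hτ δ
  have hsa : 0 < √a := sqrt_pos.2 ha
  rw [show Set.Ici r = Set.Ici (r * √a / √a) by rw [mul_div_cancel_right₀ r hsa.ne'],
    integral_Ici_eq_integral_Ioc_div_sqrt (by positivity) ha, ← integral_mul_const]
  refine setIntegral_congr_fun measurableSet_Ioc fun t ⟨ht, _⟩ => ?_
  have hst : 0 < √t := sqrt_pos.2 ht
  -- `v = r √(τ^δ / t)` is the inverse of the paper's substitution `t = τ^δ (r/v)²`
  set v := r * √a / √t
  have hv : 0 < v := by positivity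
  have hv2 : v ^ 2 = r ^ 2 * a / t := by
    rw [div_pow, mul_pow, sq_sqrt ha.le, sq_sqrt ht.le]
  have hsub : a * (r / v) ^ 2 = t := by
    rw [div_pow, hv2]; field_simp
  have hden : τ * (r / v) ^ α = t ^ (1 / δ) := by
    rw [← hsub, rpow_mul_sq_rpow_one_div hτ.le (by positivity) hδ, hα]
  have hexp : -(π * lam * r ^ 2 * betaFn δ τ r v) - π * lam * ρ * v ^ 2
      = -(π * lam * a * (betaTilde δ t + ρ) / t) * r ^ 2 := by
    rw [betaFn_eq_mul_betaTilde δ hτ hr.ne' hv.ne', hsub, div_pow, hv2]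
    field_simp
    ring
  rw [hexp, hden]
  simp only [v]
  field_simp
  rw [sq_sqrt ha.le, sq_sqrt ht.le]
  ring

/-- Deconditioning step of Theorem 2: the double integral over the link distance `r` and the
dominant-interferer distance `v` reduces, via `t = τ^δ (r/v)²`, to a single integral that is
independent of the BS density `λ`. -/
theorem stmt12 (δ α τ ρ lam : ℝ) (hδ : δ ∈ Set.Ioo (0:ℝ) 1) (hα : δ = 2 / α)
    (hτ : 0 < τ) (hρ : 0 < ρ) (hlam : 0 < lam) :
    (2 * Real.pi * lam * ρ) ^ 2 *
        ∫ r in Set.Ioi (0:ℝ),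
          (∫ v in Set.Ici r,
            (Real.exp (-(Real.pi * lam * r ^ 2 * betaFn δ τ r v) - Real.pi * lam * ρ * v ^ 2)
              / (1 + τ * (r / v) ^ α)) * v) * r
      = ρ ^ 2 * τ ^ (-δ) *
          ∫ t in Set.Ioc (0:ℝ) (τ ^ δ), ((betaTilde δ t + ρ) ^ 2)⁻¹ / (1 + t ^ (1 / δ)) := by
  have hδ₀ : δ ≠ 0 := hδ.1.ne'
  have hα' : α = 2 / δ := by rw [hα, div_div_cancel₀ two_ne_zero]
  have hc₀ : ∀ t ∈ Set.Ioc 0 (τ ^ δ), 0 < π * lam * τ ^ δ * (betaTilde δ t + ρ) / t :=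
    fun t ⟨ht, _⟩ => by have := betaTilde_nonneg δ ht; positivity
  have hint : IntegrableOn (fun t => τ ^ δ / (2 * t ^ 2 * (1 + t ^ (1 / δ)))
      / (π * lam * τ ^ δ * (betaTilde δ t + ρ) / t) ^ 2) (Set.Ioc 0 (τ ^ δ)) := by
    refine IntegrableOn.congr_fun
      ((integrableOn_betaTilde_integrand δ hρ).div_const (2 * τ ^ δ * (π * lam) ^ 2))
      (fun t ⟨ht, _⟩ => ?_) measurableSet_Ioc
    have := betaTilde_nonneg δ ht
    have := rpow_pos_of_pos ht (1 / δ)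
    field_simp
  rw [setIntegral_congr_fun measurableSet_Ioi fun r hr =>
      integral_Ici_betaFn_eq_integral_Ioc_betaTilde hδ₀ hα' hτ hr lam ρ,
    integral_Ioi_integral_mul_pow_three_mul_exp_neg_mul_sq measurableSet_Ioc (by fun_prop)
      (by fun_prop) hc₀ hint, ← integral_const_mul, ← integral_const_mul]
  refine setIntegral_congr_fun measurableSet_Ioc fun t ⟨ht, _⟩ => ?_
  have := betaTilde_nonneg δ ht
  have := rpow_pos_of_pos ht (1 / δ)
  rw [rpow_neg hτ.le]
  field_simp
end
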